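/- Let n ≥ 3 and k ∈ ℝ, and define u : ℝⁿ → ℝ by u(x) = k·x₁. Then G_{n−1}(A^u(x)) = 0 for every x ∈ ℝⁿ, while |∇u(x)| = |k|. Consequently, for p = n−1 there is no local gradient estimate of the form |∇u|² ≤ C(1 + e^{−2 inf u}) for solutions of G_{n−1}(A^u) = e^{−2u}·f with f ≡ 0: the functions u_k(x) = k·x₁ are nonnegative on the half-space {x₁ ≥ 0} but have unbounded gradients as k → ∞. -/

import Mathlib

/-!
For `u = k x₁` the gradient `k e₁` is constant, so the Hessian vanishes and
`A^u = diag(k²/2, -k²/2, …, -k²/2)`. For any symmetric `A` one has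
`G_{n-1}(A) = tr A + (n - 2) λₙ(A)`, and here `tr A = (2 - n) k²/2` while `λₙ(A) = k²/2`.
-/

open Matrix Metric Real

noncomputable section

attribute [local instance] Matrix.normedAddCommGroup Matrix.normedSpace

/-- The `i`-th partial derivative of `u` at `x`. -/
def pd {n : ℕ} (u : EuclideanSpace ℝ (Fin n) → ℝ) (x : EuclideanSpace ℝ (Fin n)) (i : Fin n) : ℝ :=
  fderiv ℝ u x (EuclideanSpace.single i 1)

/-- The Hessian matrix `∇²u(x)`. -/
def hessian {n : ℕ} (u : EuclideanSpace ℝ (Fin n) → ℝ) (x : EuclideanSpace ℝ (Fin n)) :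
    Matrix (Fin n) (Fin n) ℝ :=
  Matrix.of fun i j => pd (fun y => pd u y j) x i

/-- The conformal Schouten matrix `A^u(x) = ∇²u + ∇u ⊗ ∇u − (|∇u|²/2)·Iₙ`. -/
def schouten {n : ℕ} (u : EuclideanSpace ℝ (Fin n) → ℝ) (x : EuclideanSpace ℝ (Fin n)) :
    Matrix (Fin n) (Fin n) ℝ :=
  hessian u x + Matrix.of (fun i j => pd u x i * pd u x j)
    - ((∑ i, (pd u x i) ^ 2) / 2) • (1 : Matrix (Fin n) (Fin n) ℝ)

/-- Eigenvalues of a symmetric matrix, sorted in nondecreasing order. -/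
def sortedEig {n : ℕ} (A : Matrix (Fin n) (Fin n) ℝ) (hA : A.IsHermitian) : Fin n → ℝ :=
  hA.eigenvalues ∘ Tuple.sort hA.eigenvalues

/-- `G_p(A) = (n−p)·(λ₁+⋯+λ_p) + p·(λ_{p+1}+⋯+λₙ)` (junk value `0` on non-symmetric input). -/
def Gp {n : ℕ} (p : ℕ) (A : Matrix (Fin n) (Fin n) ℝ) : ℝ :=
  if hA : A.IsHermitian then
    ∑ i : Fin n, (if (i : ℕ) < p then ((n : ℝ) - p) else (p : ℝ)) * sortedEig A hA i
  else 0

/-- Operator norm of a matrix, acting on Euclidean space. -/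
def opNorm {n : ℕ} (A : Matrix (Fin n) (Fin n) ℝ) : ℝ :=
  ‖LinearMap.toContinuousLinearMap (Matrix.toEuclideanLin A)‖

/-- `F` is uniformly elliptic with ellipticity constants `0 < l ≤ L`. -/
def UniformlyElliptic {n : ℕ} (F : Matrix (Fin n) (Fin n) ℝ → ℝ) (l L : ℝ) : Prop :=
  0 < l ∧ l ≤ L ∧
    ∀ W N : Matrix (Fin n) (Fin n) ℝ, W.IsHermitian → N.PosSemidef →
      l * opNorm N ≤ F (W + N) - F W ∧ F (W + N) - F W ≤ L * opNorm N

/-- `F` is concave on the space of symmetric matrices. -/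
def ConcaveOnSym {n : ℕ} (F : Matrix (Fin n) (Fin n) ℝ → ℝ) : Prop :=
  ∀ A B : Matrix (Fin n) (Fin n) ℝ, A.IsHermitian → B.IsHermitian →
    ∀ t : ℝ, 0 ≤ t → t ≤ 1 → t * F A + (1 - t) * F B ≤ F (t • A + (1 - t) • B)


section SortedEigenvalues

variable {n : ℕ} {A : Matrix (Fin n) (Fin n) ℝ} (hA : A.IsHermitian)

lemma range_sortedEig : Set.range (sortedEig A hA) = spectrum ℝ A := by
  rw [sortedEig, EquivLike.range_comp, hA.spectrum_real_eq_range_eigenvalues]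

lemma sum_sortedEig : ∑ i, sortedEig A hA i = A.trace := by
  rw [hA.trace_eq_sum_eigenvalues]
  exact Equiv.sum_comp _ hA.eigenvalues

lemma sortedEig_last_eq_of_isGreatest (hn : 0 < n) {c : ℝ} (hc : IsGreatest (spectrum ℝ A) c) :
    sortedEig A hA ⟨n - 1, Nat.sub_lt hn one_pos⟩ = c := by
  rw [← range_sortedEig hA] at hc
  obtain ⟨⟨i, rfl⟩, hmax⟩ := hc
  have hi : i ≤ ⟨n - 1, Nat.sub_lt hn one_pos⟩ := Fin.le_def.mpr (Nat.le_sub_one_of_lt i.2)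
  exact le_antisymm (hmax ⟨_, rfl⟩) (Tuple.monotone_sort _ hi)

/-- For `p = n - 1` only the top eigenvalue carries a weight other than `1`. -/
lemma Gp_sub_one_eq (hn : 0 < n) :
    Gp (n - 1) A = A.trace + ((n : ℝ) - 2) * sortedEig A hA ⟨n - 1, Nat.sub_lt hn one_pos⟩ := by
  set last : Fin n := ⟨n - 1, Nat.sub_lt hn one_pos⟩
  have hcast : ((n - 1 : ℕ) : ℝ) = n - 1 := Nat.cast_pred hn
  have hweight : ∀ i : Fin n,
      (if (i : ℕ) < n - 1 then (n : ℝ) - (n - 1 : ℕ) else ((n - 1 : ℕ) : ℝ)) * sortedEig A hA i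
        = sortedEig A hA i + if i = last then ((n : ℝ) - 2) * sortedEig A hA i else 0 := by
    intro i
    by_cases h : i = last
    · rw [if_neg (by simp [h, last]), if_pos h, hcast]; ring
    · have hi : (i : ℕ) < n - 1 := by
        have : (i : ℕ) ≠ n - 1 := fun hc => h (Fin.ext hc)
        omega
      rw [if_pos hi, if_neg h, hcast]; ring
  rw [Gp, dif_pos hA, Finset.sum_congr rfl fun i _ => hweight i, Finset.sum_add_distrib,
    Finset.sum_ite_eq' Finset.univ last, if_pos (Finset.mem_univ _), sum_sortedEig]

end SortedEigenvalues

section ConstantGradient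

variable {n : ℕ} {u : EuclideanSpace ℝ (Fin n) → ℝ} {φ : EuclideanSpace ℝ (Fin n) →L[ℝ] ℝ}

lemma pd_eq_of_fderiv_eq (h : ∀ x, fderiv ℝ u x = φ) (x : EuclideanSpace ℝ (Fin n)) (i : Fin n) :
    pd u x i = φ (EuclideanSpace.single i 1) := by
  rw [pd, h]

lemma hessian_eq_zero_of_fderiv_eq (h : ∀ x, fderiv ℝ u x = φ) (x : EuclideanSpace ℝ (Fin n)) :
    hessian u x = 0 := by
  ext i j
  simp [hessian, pd, h]

lemma schouten_eq_of_fderiv_eq (h : ∀ x, fderiv ℝ u x = φ) (x : EuclideanSpace ℝ (Fin n)) :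
    schouten u x =
      of (fun i j => φ (EuclideanSpace.single i 1) * φ (EuclideanSpace.single j 1))
        - ((∑ i, φ (EuclideanSpace.single i 1) ^ 2) / 2) • (1 : Matrix (Fin n) (Fin n) ℝ) := by
  simp only [schouten, hessian_eq_zero_of_fderiv_eq h, pd_eq_of_fderiv_eq h, zero_add]

end ConstantGradient

section CoordinateFunction

variable {n : ℕ} (k : ℝ) (i₀ : Fin n)

lemma fderiv_mul_coord (x : EuclideanSpace ℝ (Fin n)) :
    fderiv ℝ (fun y : EuclideanSpace ℝ (Fin n) => k * y i₀) x
      = k • innerSL ℝ (EuclideanSpace.single i₀ (1 : ℝ)) := by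
  have : (fun y : EuclideanSpace ℝ (Fin n) => k * y i₀)
      = ⇑(k • innerSL ℝ (EuclideanSpace.single i₀ (1 : ℝ))) := by
    funext y
    simp [EuclideanSpace.inner_single_left]
  rw [this, ContinuousLinearMap.fderiv]

lemma schouten_mul_coord (x : EuclideanSpace ℝ (Fin n)) :
    schouten (fun y => k * y i₀) x = diagonal fun i => if i = i₀ then k ^ 2 / 2 else -(k ^ 2 / 2) := by
  have hφ : ∀ i, (k • innerSL ℝ (EuclideanSpace.single i₀ (1 : ℝ))) (EuclideanSpace.single i 1)
      = if i = i₀ then k else 0 := by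
    intro i
    simp [EuclideanSpace.inner_single_left, eq_comm]
  rw [schouten_eq_of_fderiv_eq (fderiv_mul_coord k i₀) x]
  ext i j
  rcases eq_or_ne i j with rfl | hij
  · by_cases h : i = i₀
    · simp [hφ, h]; ring
    · simp [hφ, h]
  · by_cases h : i = i₀
    · subst h; simp [hφ, hij, hij.symm]
    · simp [hφ, h, hij]

lemma trace_schouten_mul_coord (x : EuclideanSpace ℝ (Fin n)) :
    (schouten (fun y => k * y i₀) x).trace = (2 - n) * (k ^ 2 / 2) := by
  rw [schouten_mul_coord, trace_diagonal, ← Finset.add_sum_erase _ _ (Finset.mem_univ i₀),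
    Finset.sum_congr rfl fun i hi => if_neg (Finset.ne_of_mem_erase hi)]
  simp [Finset.card_erase_of_mem, Nat.cast_pred i₀.pos]
  ring

lemma isGreatest_spectrum_schouten_mul_coord (x : EuclideanSpace ℝ (Fin n)) :
    IsGreatest (spectrum ℝ (schouten (fun y => k * y i₀) x)) (k ^ 2 / 2) := by
  rw [schouten_mul_coord, spectrum_diagonal]
  refine ⟨⟨i₀, if_pos rfl⟩, ?_⟩
  rintro _ ⟨i, rfl⟩
  have : 0 ≤ k ^ 2 / 2 := by positivity
  dsimp only
  split_ifs <;> linarith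

end CoordinateFunction

/-- **No local gradient estimate for `p = n−1`**: the linear functions `u(x) = k·x₁` satisfy
`G_{n−1}(A^u) ≡ 0` (i.e. the equation with `f ≡ 0`) with `|∇u| ≡ |k|`; for `k ≥ 0` they are
nonnegative on the half-space `{x₁ ≥ 0}` while their gradients are unbounded as `k → ∞`. -/
theorem no_gradient_estimate_p_eq_n_sub_one (n : ℕ) (hn : 3 ≤ n) (k : ℝ)
    (u : EuclideanSpace ℝ (Fin n) → ℝ)
    (hu : ∀ x, u x = k * x ⟨0, by omega⟩) :
    (∀ x, Gp (n - 1) (schouten u x) = 0) ∧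
    (∀ x, ‖fderiv ℝ u x‖ = |k|) ∧
    (0 ≤ k → ∀ x : EuclideanSpace ℝ (Fin n), 0 ≤ x ⟨0, by omega⟩ → 0 ≤ u x) := by
  have hn0 : 0 < n := by omega
  obtain rfl : u = fun x => k * x ⟨0, hn0⟩ := funext hu
  refine ⟨fun x => ?_, fun x => ?_, fun hk x hx => mul_nonneg hk hx⟩
  · have hA : (schouten (fun y => k * y ⟨0, hn0⟩) x).IsHermitian := by
      rw [schouten_mul_coord]
      exact isHermitian_diagonal _
    rw [Gp_sub_one_eq hA hn0,
      sortedEig_last_eq_of_isGreatest hA hn0 (isGreatest_spectrum_schouten_mul_coord _ _ x),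
      trace_schouten_mul_coord]
    ring
  · rw [fderiv_mul_coord, norm_smul, innerSL_apply_norm, PiLp.norm_single]
    simp
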